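/- arXiv:2302.05149 — 3 statements merged into one kernel-verified Lean document; each statement's English description precedes it below -/
import Mathlib

section
/- Let d ≥ 1, let q > 1 and s = 1 − 1/q, and let μ be a Borel probability measure on [0,1]^d which is absolutely continuous with respect to Lebesgue measure λ^d with density h ∈ L^q(λ^d). Then for every x ∈ [0,1]^d and all ξ = (ξ_1,…,ξ_d), r = (r_1,…,r_d) ∈ [0,∞)^d: μ(R(x, ξ + r)) ≤ μ(R(x, ξ)) + 2d·‖h‖_q·(max_{1≤i≤d} r_i)^s and μ(R(x, ξ − r)) ≥ μ(R(x, ξ)) − 2d·‖h‖_q·(max_{1≤i≤d} r_i)^s, where ξ ± r is taken componentwise and ‖h‖_q := (∫_{[0,1]^d} |h|^q dλ^d)^{1/q}. -/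
open MeasureTheory Filter Set Metric Topology
open scoped ENNReal NNReal

noncomputable section

/-- The unit cube `[0,1]^d`. -/
def unitCube (d : ℕ) : Set (Fin d → ℝ) := {x | ∀ i, x i ∈ Set.Icc (0 : ℝ) 1}

/-- The open hyperrectangle `R(x,s) = {z : |z_i - x_i| < s_i for all i}`. -/
def Rect {d : ℕ} (x s : Fin d → ℝ) : Set (Fin d → ℝ) := {z | ∀ i, |z i - x i| < s i}

/-- The hyperboloid `H(x,δ) = x + {z ∈ [-1,1]^d : |z_1 ⋯ z_d| < δ}`. -/
def Hyp {d : ℕ} (x : Fin d → ℝ) (δ : ℝ) : Set (Fin d → ℝ) :=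
  {z | (∀ i, |z i - x i| ≤ 1) ∧ |∏ i, (z i - x i)| < δ}

/-!
Enlarging `R(x, ξ)` to `R(x, ξ + r)` adds only points lying, for some coordinate `i`, in the
pair of slabs `ξ_i ≤ |z_i - x_i| < ξ_i + r_i`, whose intersection with the unit cube has volume
at most `2 r_i`. By Hölder's inequality a set `A` has `μ`-mass at most
`‖h‖_q · λ(A ∩ [0,1]^d)^(1 - 1/q)`, so each of the `d` slabs contributes at most
`‖h‖_q (2 max_i r_i)^s ≤ 2 ‖h‖_q (max_i r_i)^s`. The lower bound is the upper bound applied to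
`ξ - r` and `ξ`.
-/

section Holder

variable {α : Type*} [MeasurableSpace α] {μ : Measure α}

theorem setLIntegral_enorm_le_eLpNorm_mul_measure_rpow {E : Type*} [NormedAddCommGroup E]
    {f : α → E} {q : ℝ} (hq : 1 ≤ q) (hf : AEStronglyMeasurable f μ) (A : Set α) :
    ∫⁻ x in A, ‖f x‖ₑ ∂μ ≤ eLpNorm f (ENNReal.ofReal q) μ * μ A ^ (1 - 1 / q) := by
  have hq' : (1 : ℝ≥0∞) ≤ ENNReal.ofReal q := by simpa using ENNReal.ofReal_le_ofReal hq
  calc ∫⁻ x in A, ‖f x‖ₑ ∂μ = eLpNorm f 1 (μ.restrict A) := eLpNorm_one_eq_lintegral_enorm.symm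
    _ ≤ eLpNorm f (ENNReal.ofReal q) (μ.restrict A) *
          μ.restrict A univ ^ (1 / (1 : ℝ≥0∞).toReal - 1 / (ENNReal.ofReal q).toReal) :=
        eLpNorm_le_eLpNorm_mul_rpow_measure_univ hq' hf.restrict
    _ ≤ eLpNorm f (ENNReal.ofReal q) μ * μ A ^ (1 - 1 / q) := by
        rw [Measure.restrict_apply_univ, ENNReal.toReal_one, ENNReal.toReal_ofReal (by linarith),
          div_one]
        gcongr ?_ * _
        exact eLpNorm_restrict_le f _ μ A

theorem withDensity_ofReal_le_eLpNorm_mul_measure_inter_rpow [SFinite μ] {f : α → ℝ} {S : Set α}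
    (hS : MeasurableSet S) (hfS : ∀ x ∉ S, f x = 0) {q : ℝ} (hq : 1 ≤ q)
    (hf : AEStronglyMeasurable f μ) (A : Set α) :
    μ.withDensity (fun x => ENNReal.ofReal (f x)) A ≤
      eLpNorm f (ENNReal.ofReal q) μ * μ (A ∩ S) ^ (1 - 1 / q) := by
  have hSc : μ.withDensity (fun x => ENNReal.ofReal (f x)) Sᶜ = 0 := by
    rw [withDensity_apply _ hS.compl]
    exact (setLIntegral_congr_fun hS.compl fun x hx => by simp [hfS x hx]).trans lintegral_zero
  rw [← measure_inter_conull hSc, withDensity_apply']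
  calc ∫⁻ x in A ∩ S, ENNReal.ofReal (f x) ∂μ ≤ ∫⁻ x in A ∩ S, ‖f x‖ₑ ∂μ :=
        lintegral_mono fun x => Real.ofReal_le_enorm _
    _ ≤ _ := setLIntegral_enorm_le_eLpNorm_mul_measure_rpow hq hf _

theorem MeasureTheory.MemLp.eLpNorm_ofReal_eq_setIntegral_rpow_abs {f : α → ℝ} {S : Set α}
    (hfS : ∀ x ∉ S, f x = 0) {q : ℝ} (hq : 0 < q) (hf : MemLp f (ENNReal.ofReal q) μ) :
    eLpNorm f (ENNReal.ofReal q) μ = ENNReal.ofReal ((∫ x in S, |f x| ^ q ∂μ) ^ (1 / q)) := by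
  rw [hf.eLpNorm_eq_integral_rpow_norm (by simpa using hq) ENNReal.ofReal_ne_top,
    ENNReal.toReal_ofReal hq.le, setIntegral_eq_integral_of_forall_compl_eq_zero
      fun x hx => by simp [hfS x hx, hq.ne']]
  simp [Real.norm_eq_abs]

end Holder

theorem volume_abs_sub_mem_Ico_le (c a b : ℝ) :
    volume {t : ℝ | |t - c| ∈ Ico a b} ≤ ENNReal.ofReal (2 * (b - a)) := by
  have hsub : {t : ℝ | |t - c| ∈ Ico a b} ⊆ Ico (c + a) (c + b) ∪ Ioc (c - b) (c - a) := by
    rintro t ⟨hat, htb⟩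
    rcases abs_cases (t - c) with ⟨habs, _⟩ | ⟨habs, _⟩ <;> rw [habs] at hat htb
    · exact Or.inl ⟨by linarith, by linarith⟩
    · exact Or.inr ⟨by linarith, by linarith⟩
  calc volume {t : ℝ | |t - c| ∈ Ico a b}
      ≤ volume (Ico (c + a) (c + b)) + volume (Ioc (c - b) (c - a)) :=
        (measure_mono hsub).trans (measure_union_le _ _)
    _ = ENNReal.ofReal (2 * (b - a)) := by
        rw [Real.volume_Ico, Real.volume_Ioc, ENNReal.ofReal_mul zero_le_two]
        ring_nf
        simp

theorem unitCube_eq_pi (d : ℕ) : unitCube d = univ.pi fun _ => Icc (0 : ℝ) 1 := by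
  ext z
  exact mem_univ_pi.symm

theorem measurableSet_unitCube (d : ℕ) : MeasurableSet (unitCube d) := by
  rw [unitCube_eq_pi]
  exact MeasurableSet.univ_pi fun _ => measurableSet_Icc

def Slab {d : ℕ} (x : Fin d → ℝ) (i : Fin d) (a b : ℝ) : Set (Fin d → ℝ) :=
  {z | |z i - x i| ∈ Ico a b}

theorem volume_slab_inter_unitCube_le {d : ℕ} (x : Fin d → ℝ) (i : Fin d) (a b : ℝ) :
    volume (Slab x i a b ∩ unitCube d) ≤ ENNReal.ofReal (2 * (b - a)) := by
  have hsub : Slab x i a b ∩ unitCube d ⊆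
      univ.pi (Function.update (fun _ => Icc (0 : ℝ) 1) i {t | |t - x i| ∈ Ico a b}) := by
    rintro z ⟨hz, hcube⟩ j -
    rcases eq_or_ne j i with rfl | hji
    · rw [Function.update_self]
      exact hz
    · simpa [hji] using hcube j
  refine (measure_mono hsub).trans ?_
  rw [volume_pi_pi, Finset.prod_eq_single i (fun j _ hji => by simp [hji]) (by simp),
    Function.update_self]
  exact volume_abs_sub_mem_Ico_le (x i) a b

theorem rect_subset_union_slab {d : ℕ} (x ξ' ξ'' : Fin d → ℝ) :
    Rect x ξ'' ⊆ Rect x ξ' ∪ ⋃ i, Slab x i (ξ' i) (ξ'' i) := by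
  intro z hz
  by_cases hz' : z ∈ Rect x ξ'
  · exact Or.inl hz'
  · simp only [Rect, mem_ofPred_eq, not_forall, not_lt] at hz'
    obtain ⟨i, hi⟩ := hz'
    exact Or.inr (mem_iUnion.2 ⟨i, hi, hz i⟩)

section

variable {d : ℕ} {q : ℝ} {h : (Fin d → ℝ) → ℝ}

theorem withDensity_rect_le_add (hq : 1 ≤ q) (hh : AEStronglyMeasurable h volume)
    (hsupp : ∀ x, x ∉ unitCube d → h x = 0) (x ξ' ξ'' : Fin d → ℝ) {R : ℝ}
    (hR : ∀ i, ξ'' i - ξ' i ≤ R) :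
    volume.withDensity (fun z => ENNReal.ofReal (h z)) (Rect x ξ'') ≤
      volume.withDensity (fun z => ENNReal.ofReal (h z)) (Rect x ξ') +
        d * (eLpNorm h (ENNReal.ofReal q) volume * ENNReal.ofReal (2 * R) ^ (1 - 1 / q)) := by
  set ν := volume.withDensity fun z => ENNReal.ofReal (h z)
  have hs : 0 ≤ 1 - 1 / q := sub_nonneg.2 ((div_le_one (by linarith)).2 hq)
  have hslab : ∀ i, ν (Slab x i (ξ' i) (ξ'' i)) ≤
      eLpNorm h (ENNReal.ofReal q) volume * ENNReal.ofReal (2 * R) ^ (1 - 1 / q) := fun i =>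
    calc ν (Slab x i (ξ' i) (ξ'' i))
        ≤ eLpNorm h (ENNReal.ofReal q) volume *
            volume (Slab x i (ξ' i) (ξ'' i) ∩ unitCube d) ^ (1 - 1 / q) :=
          withDensity_ofReal_le_eLpNorm_mul_measure_inter_rpow (measurableSet_unitCube d) hsupp
            hq hh _
      _ ≤ _ := by
          gcongr
          exact (volume_slab_inter_unitCube_le x i _ _).trans
            (ENNReal.ofReal_le_ofReal (by linarith [hR i]))
  calc ν (Rect x ξ'')
      ≤ ν (Rect x ξ') + ∑ i, ν (Slab x i (ξ' i) (ξ'' i)) :=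
        (measure_mono (rect_subset_union_slab x ξ' ξ'')).trans <|
          (measure_union_le _ _).trans (add_le_add_right (measure_iUnion_fintype_le _ _) _)
    _ ≤ _ := by
        grw [Finset.sum_le_sum fun i _ => hslab i]
        simp

theorem toReal_withDensity_rect_le_add (hq : 1 < q) (hLq : MemLp h (ENNReal.ofReal q) volume)
    (hsupp : ∀ x, x ∉ unitCube d → h x = 0)
    [IsFiniteMeasure (volume.withDensity fun z => ENNReal.ofReal (h z))]
    (x ξ' ξ'' : Fin d → ℝ) {R : ℝ} (hR0 : 0 ≤ R) (hR : ∀ i, ξ'' i - ξ' i ≤ R) :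
    (volume.withDensity (fun z => ENNReal.ofReal (h z)) (Rect x ξ'')).toReal ≤
      (volume.withDensity (fun z => ENNReal.ofReal (h z)) (Rect x ξ')).toReal +
        2 * d * ((∫ y in unitCube d, |h y| ^ q) ^ (1 / q)) * R ^ (1 - 1 / q) := by
  set ν := volume.withDensity fun z => ENNReal.ofReal (h z)
  set M := (∫ y in unitCube d, |h y| ^ q) ^ (1 / q)
  set s := 1 - 1 / q
  have hM : 0 ≤ M := by positivity
  have hs0 : 0 ≤ s := sub_nonneg.2 ((div_le_one (by linarith)).2 hq.le)
  have hs1 : s ≤ 1 := sub_le_self _ (by positivity)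
  have hbound := withDensity_rect_le_add hq.le hLq.aestronglyMeasurable hsupp x ξ' ξ'' hR
  rw [hLq.eLpNorm_ofReal_eq_setIntegral_rpow_abs hsupp (by linarith)] at hbound
  have hpow : (2 * R) ^ s ≤ 2 * R ^ s := by
    rw [Real.mul_rpow zero_le_two hR0]
    gcongr
    exact Real.rpow_le_self_of_one_le one_le_two hs1
  calc (ν (Rect x ξ'')).toReal
      ≤ (ν (Rect x ξ') + d * (ENNReal.ofReal M * ENNReal.ofReal (2 * R) ^ s)).toReal :=
        ENNReal.toReal_mono (by finiteness) hbound
    _ = (ν (Rect x ξ')).toReal + d * (M * (2 * R) ^ s) := by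
        rw [ENNReal.toReal_add (by finiteness) (by finiteness), ENNReal.toReal_mul,
          ENNReal.toReal_mul, ENNReal.toReal_natCast, ENNReal.toReal_ofReal hM,
          ← ENNReal.toReal_rpow, ENNReal.toReal_ofReal (by positivity)]
    _ ≤ (ν (Rect x ξ')).toReal + 2 * d * M * R ^ s := by
        linarith [mul_le_mul_of_nonneg_left hpow (by positivity : (0 : ℝ) ≤ d * M)]

end

theorem statement7_general (d : ℕ) (q : ℝ) (hq : 1 < q)
    (h : (Fin d → ℝ) → ℝ)
    (hLq : MemLp h (ENNReal.ofReal q) volume)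
    (hsupp : ∀ x, x ∉ unitCube d → h x = 0)
    (μ : Measure (Fin d → ℝ))
    (hdens : μ = volume.withDensity fun x => ENNReal.ofReal (h x))
    (hprob : IsProbabilityMeasure μ)
    (x : Fin d → ℝ)
    (ξ r : Fin d → ℝ) (hr : ∀ i, 0 ≤ r i) :
    (μ (Rect x (ξ + r))).toReal ≤
        (μ (Rect x ξ)).toReal +
          2 * d * ((∫ y in unitCube d, |h y| ^ q) ^ (1 / q)) * (⨆ i, r i) ^ (1 - 1 / q) ∧
      (μ (Rect x ξ)).toReal -
          2 * d * ((∫ y in unitCube d, |h y| ^ q) ^ (1 / q)) * (⨆ i, r i) ^ (1 - 1 / q) ≤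
        (μ (Rect x (ξ - r))).toReal := by
  subst hdens
  have hrR : ∀ i, r i ≤ ⨆ i, r i := le_ciSup (finite_range r).bddAbove
  have hR : 0 ≤ ⨆ i, r i := Real.iSup_nonneg hr
  refine ⟨toReal_withDensity_rect_le_add hq hLq hsupp x ξ (ξ + r) hR fun i => ?_, ?_⟩
  · simp [hrR i]
  · have := toReal_withDensity_rect_le_add hq hLq hsupp x (ξ - r) ξ hR fun i => by simp [hrR i]
    linarith

theorem statement7 (d : ℕ) (hd : 1 ≤ d) (q : ℝ) (hq : 1 < q)
    (h : (Fin d → ℝ) → ℝ)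
    (hLq : MemLp h (ENNReal.ofReal q) volume)
    (hsupp : ∀ x, x ∉ unitCube d → h x = 0)
    (μ : Measure (Fin d → ℝ))
    (hdens : μ = volume.withDensity fun x => ENNReal.ofReal (h x))
    (hprob : IsProbabilityMeasure μ)
    (x : Fin d → ℝ) (hx : x ∈ unitCube d)
    (ξ r : Fin d → ℝ) (hξ : ∀ i, 0 ≤ ξ i) (hr : ∀ i, 0 ≤ r i) :
    (μ (Rect x (ξ + r))).toReal ≤
        (μ (Rect x ξ)).toReal +
          2 * d * ((∫ y in unitCube d, |h y| ^ q) ^ (1 / q)) * (⨆ i, r i) ^ (1 - 1 / q) ∧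
      (μ (Rect x ξ)).toReal -
          2 * d * ((∫ y in unitCube d, |h y| ^ q) ^ (1 / q)) * (⨆ i, r i) ^ (1 - 1 / q) ≤
        (μ (Rect x (ξ - r))).toReal :=
  statement7_general d q hq h hLq hsupp μ hdens hprob x ξ r hr
end
end

section
/- Let d ≥ 1, let T : [0,1]^d → [0,1]^d be any map, let n ∈ ℕ, let δ_n ≥ 0, let x ∈ [0,1]^d and 0 < r ≤ 1, and let F ⊆ B(x,r) ∩ [0,1]^d, where B(x,r) is the max-norm ball of centre x and radius r. Define D_n := {z ∈ [0,1]^d : T^n z ∈ H(z, δ_n)}. Then F ∩ T^{−n}H(x, δ_n − 2^d r) ⊆ F ∩ D_n ⊆ F ∩ T^{−n}H(x, δ_n + 2^d r). -/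
open MeasureTheory Filter Set Metric Topology
open scoped ENNReal NNReal

noncomputable section

lemma prod_diff_le {d : ℕ} (a b : Fin d → ℝ) (r : ℝ)
    (ha : ∀ i, |a i| ≤ 1) (hb : ∀ i, |b i| ≤ 1) (hab : ∀ i, |a i - b i| ≤ r)
    (s : Finset (Fin d)) :
    |∏ i ∈ s, a i - ∏ i ∈ s, b i| ≤ s.card * r := by
  induction s using Finset.induction with
  | empty => simp
  | @insert i s hi ih =>
    have hra : |∏ j ∈ s, a j| ≤ 1 := by
      rw [Finset.abs_prod]
      exact Finset.prod_le_one (fun j _ => abs_nonneg _) (fun j _ => ha j)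
    have key : a i * ∏ j ∈ s, a j - b i * ∏ j ∈ s, b j
        = (a i - b i) * ∏ j ∈ s, a j + b i * (∏ j ∈ s, a j - ∏ j ∈ s, b j) := by ring
    have hr0 : 0 ≤ r := le_trans (abs_nonneg _) (hab i)
    rw [Finset.prod_insert hi, Finset.prod_insert hi, Finset.card_insert_of_notMem hi, key]
    calc |(a i - b i) * ∏ j ∈ s, a j + b i * (∏ j ∈ s, a j - ∏ j ∈ s, b j)|
        ≤ |(a i - b i) * ∏ j ∈ s, a j| + |b i * (∏ j ∈ s, a j - ∏ j ∈ s, b j)| :=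
          abs_add_le _ _
      _ = |a i - b i| * |∏ j ∈ s, a j| + |b i| * |∏ j ∈ s, a j - ∏ j ∈ s, b j| := by
          rw [abs_mul, abs_mul]
      _ ≤ r * 1 + 1 * (s.card * r) := by
          gcongr
          · exact hab i
          · exact hb i
      _ = (s.card + 1) * r := by ring
      _ = ((s.card + 1 : ℕ) : ℝ) * r := by push_cast; ring

theorem statement12 (d : ℕ) (hd : 1 ≤ d)
    (T : (Fin d → ℝ) → (Fin d → ℝ))
    (hT : Set.MapsTo T (unitCube d) (unitCube d))
    (n : ℕ) (δn : ℝ) (hδn : 0 ≤ δn)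
    (x : Fin d → ℝ) (hx : x ∈ unitCube d)
    (r : ℝ) (hr : 0 < r) (hr1 : r ≤ 1)
    (F : Set (Fin d → ℝ)) (hF : F ⊆ Metric.closedBall x r ∩ unitCube d) :
    F ∩ T^[n] ⁻¹' Hyp x (δn - 2 ^ d * r) ⊆
        F ∩ {z | z ∈ unitCube d ∧ T^[n] z ∈ Hyp z δn} ∧
      F ∩ {z | z ∈ unitCube d ∧ T^[n] z ∈ Hyp z δn} ⊆
        F ∩ T^[n] ⁻¹' Hyp x (δn + 2 ^ d * r) := by
  have hdr : (d : ℝ) * r ≤ 2 ^ d * r := by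
    gcongr
    calc (d : ℝ) ≤ ((2 ^ d : ℕ) : ℝ) := by exact_mod_cast (Nat.lt_two_pow_self (n := d)).le
      _ = 2 ^ d := by push_cast; ring
  -- common facts for z ∈ F
  have hfacts : ∀ z ∈ F, (z ∈ unitCube d) ∧ (∀ i, |z i - x i| ≤ r)
      ∧ (T^[n] z ∈ unitCube d) := by
    intro z hz
    obtain ⟨hzb, hzc⟩ := hF hz
    refine ⟨hzc, ?_, ?_⟩
    · intro i
      have := mem_closedBall.mp hzb
      rw [dist_pi_le_iff hr.le] at this
      have := this i
      rwa [Real.dist_eq] at this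
    · have : Set.MapsTo T^[n] (unitCube d) (unitCube d) := hT.iterate n
      exact this hzc
  have habs1 : ∀ u v : Fin d → ℝ, u ∈ unitCube d → v ∈ unitCube d →
      ∀ i, |u i - v i| ≤ 1 := by
    intro u v hu hv i
    have h1 := hu i
    have h2 := hv i
    rw [abs_le]
    constructor <;> [linarith [h1.1, h2.2]; linarith [h1.2, h2.1]]
  constructor
  · rintro z ⟨hzF, hzH⟩
    obtain ⟨hzc, hzr, hwc⟩ := hfacts z hzF
    set w := T^[n] z with hw
    refine ⟨hzF, hzc, habs1 w z hwc hzc, ?_⟩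
    have hHx : w ∈ Hyp x (δn - 2 ^ d * r) := hzH
    have hkey : |∏ i, (w i - z i) - ∏ i, (w i - x i)| ≤ (d : ℝ) * r := by
      have := prod_diff_le (fun i => w i - z i) (fun i => w i - x i) r
        (habs1 w z hwc hzc) (hHx.1) (fun i => by
          rw [show (w i - z i) - (w i - x i) = -(z i - x i) by ring, abs_neg]
          exact hzr i) Finset.univ
      simpa using this
    have := hHx.2
    calc |∏ i, (w i - z i)| ≤ |∏ i, (w i - x i)| + (d : ℝ) * r := by
          have := abs_sub_abs_le_abs_sub (∏ i, (w i - z i)) (∏ i, (w i - x i))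
          linarith [hkey, this]
      _ < (δn - 2 ^ d * r) + (d : ℝ) * r := by linarith
      _ ≤ δn := by linarith
  · rintro z ⟨hzF, hzc, hzH⟩
    obtain ⟨_, hzr, hwc⟩ := hfacts z hzF
    set w := T^[n] z with hw
    refine ⟨hzF, habs1 w x hwc hx, ?_⟩
    have hkey : |∏ i, (w i - x i) - ∏ i, (w i - z i)| ≤ (d : ℝ) * r := by
      have := prod_diff_le (fun i => w i - x i) (fun i => w i - z i) r
        (habs1 w x hwc hx) (hzH.1) (fun i => by
          rw [show (w i - x i) - (w i - z i) = z i - x i by ring]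
          exact hzr i) Finset.univ
      simpa using this
    calc |∏ i, (w i - x i)| ≤ |∏ i, (w i - z i)| + (d : ℝ) * r := by
          have := abs_sub_abs_le_abs_sub (∏ i, (w i - x i)) (∏ i, (w i - z i))
          linarith [hkey, this]
      _ < δn + (d : ℝ) * r := by linarith [hzH.2]
      _ ≤ δn + 2 ^ d * r := by linarith
end
end

section
/- Let d ≥ 1 and let r > 0 and δ > 0 be real numbers with δ ≤ r^d. Then the d-dimensional Lebesgue measure of the set {z ∈ ℝ^d : |z_i| < r for all 1 ≤ i ≤ d and |z_1 z_2 ⋯ z_d| < δ} equals 2^d·δ·Σ_{t=0}^{d−1} (1/t!)·(log(r^d/δ))^t. -/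
/-!
Slice along the first coordinate. For `x ≠ 0` the slice over `x` of the `(d + 1)`-dimensional set
is empty if `|x| ≥ r` and is the `d`-dimensional set with `δ / |x|` in place of `δ` otherwise,
which is the whole cube `(-r, r) ^ d` when `|x| < a := δ / r ^ d`. With
`E d u = ∑ t < d, u ^ t / t!`, induction on `d` gives the volume as
`2 * (a * (2 * r) ^ d + ∫ x in a..r, 2 ^ d * (δ / x) * E d (log (x / a)))`. Since the derivative
of `E (d + 1)` is `E d` and `E (d + 1) 0 = 1`, the integral is
`2 ^ d * δ * (E (d + 1) (log (r ^ (d + 1) / δ)) - 1)`, while `a * (2 * r) ^ d = 2 ^ d * δ`.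
-/

open MeasureTheory Set
open scoped ENNReal

noncomputable section

def expPartialSum (n : ℕ) (x : ℝ) : ℝ :=
  ∑ t ∈ Finset.range n, (1 / (t.factorial : ℝ)) * x ^ t

lemma expPartialSum_nonneg (n : ℕ) {x : ℝ} (hx : 0 ≤ x) : 0 ≤ expPartialSum n x :=
  Finset.sum_nonneg fun t _ => by positivity

lemma expPartialSum_le_exp (n : ℕ) {x : ℝ} (hx : 0 ≤ x) : expPartialSum n x ≤ Real.exp x := by
  simpa [expPartialSum, div_eq_inv_mul] using Real.sum_le_exp_of_nonneg hx n

lemma expPartialSum_succ_zero (n : ℕ) : expPartialSum (n + 1) 0 = 1 := by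
  simp [expPartialSum, Finset.sum_range_succ']

lemma hasDerivAt_expPartialSum_succ (n : ℕ) (x : ℝ) :
    HasDerivAt (expPartialSum (n + 1)) (expPartialSum n x) x := by
  have hterm (t : ℕ) : HasDerivAt (fun y => (1 / ((t + 1).factorial : ℝ)) * y ^ (t + 1))
      ((1 / (t.factorial : ℝ)) * x ^ t) x := by
    refine ((hasDerivAt_pow (t + 1) x).const_mul _).congr_deriv ?_
    push_cast [Nat.factorial_succ]
    field_simp
  have hsum := (HasDerivAt.fun_sum fun t (_ : t ∈ Finset.range n) => hterm t).const_add 1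
  have hfun : expPartialSum (n + 1) =
      fun y => 1 + ∑ t ∈ Finset.range n, (1 / ((t + 1).factorial : ℝ)) * y ^ (t + 1) := by
    ext y
    simp [expPartialSum, Finset.sum_range_succ', add_comm]
  exact hfun ▸ hsum

lemma setIntegral_Ioo_comp_abs (f : ℝ → ℝ) (r : ℝ) :
    ∫ x in Ioo (-r) r, f |x| = 2 * ∫ x in Ioo 0 r, f x := by
  have h : (Ioo (-r) r).indicator (fun x => f |x|) = fun x => (Iio r).indicator f |x| := by
    ext x
    simp only [indicator, mem_Ioo, mem_Iio, ← abs_lt]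
  rw [← integral_indicator measurableSet_Ioo, h, integral_comp_abs,
    setIntegral_indicator measurableSet_Iio, Ioi_inter_Iio]

def hyperbolicCross (d : ℕ) (r δ : ℝ) : Set (Fin d → ℝ) :=
  {z | (∀ i, |z i| < r) ∧ |∏ i, z i| < δ}

lemma measurableSet_hyperbolicCross (d : ℕ) (r δ : ℝ) :
    MeasurableSet (hyperbolicCross d r δ) := by
  unfold hyperbolicCross
  measurability

lemma hyperbolicCross_eq_pi_of_pow_lt {d : ℕ} {r δ : ℝ} (h : r ^ d < δ) :
    hyperbolicCross d r δ = univ.pi fun _ => Ioo (-r) r := by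
  ext z
  simp only [hyperbolicCross, mem_ofPred_eq, mem_univ_pi, mem_Ioo, ← abs_lt, and_iff_left_iff_imp]
  intro hz
  calc |∏ i, z i| = ∏ i, |z i| := Finset.abs_prod _ _
    _ ≤ ∏ _i : Fin d, r := Finset.prod_le_prod (fun i _ => abs_nonneg _) fun i _ => (hz i).le
    _ = r ^ d := by simp
    _ < δ := h

lemma volume_hyperbolicCross_of_pow_lt {d : ℕ} {r δ : ℝ} (hr : 0 ≤ r) (h : r ^ d < δ) :
    volume (hyperbolicCross d r δ) = ENNReal.ofReal ((2 * r) ^ d) := by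
  rw [hyperbolicCross_eq_pi_of_pow_lt h, volume_pi_pi, Real.volume_Ioo, Finset.prod_const,
    Finset.card_univ, Fintype.card_fin, ← ENNReal.ofReal_pow (by linarith)]
  ring_nf

lemma cons_mem_hyperbolicCross_succ {d : ℕ} {r δ x : ℝ} (hx : x ≠ 0) (y : Fin d → ℝ) :
    Fin.cons x y ∈ hyperbolicCross (d + 1) r δ ↔
      |x| < r ∧ y ∈ hyperbolicCross d r (δ / |x|) := by
  simp only [hyperbolicCross, mem_ofPred_eq, Fin.forall_fin_succ, Fin.prod_univ_succ,
    Fin.cons_zero, Fin.cons_succ, abs_mul, lt_div_iff₀ (abs_pos.2 hx), mul_comm _ |x|, and_assoc]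

/-- At `x = 0` the true slice is the whole cube, not `hyperbolicCross d r (δ / 0) = ∅`, but a
single point is negligible. -/
lemma volume_hyperbolicCross_succ (d : ℕ) (r δ : ℝ) :
    volume (hyperbolicCross (d + 1) r δ) =
      ∫⁻ x in Ioo (-r) r, volume (hyperbolicCross d r (δ / |x|)) := by
  have hmp := (volume_preserving_piFinSuccAbove (fun _ : Fin (d + 1) => ℝ) 0).symm
  have hS := measurableSet_hyperbolicCross (d + 1) r δ
  rw [← hmp.measure_preimage hS.nullMeasurableSet, Measure.volume_eq_prod,
    Measure.prod_apply (hS.preimage hmp.measurable), ← lintegral_indicator measurableSet_Ioo]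
  refine lintegral_congr_ae ?_
  filter_upwards [Measure.ae_ne volume 0] with x hx
  have hsection : Prod.mk x ⁻¹' ((MeasurableEquiv.piFinSuccAbove (fun _ => ℝ) 0).symm ⁻¹'
      hyperbolicCross (d + 1) r δ) = {y | |x| < r ∧ y ∈ hyperbolicCross d r (δ / |x|)} := by
    ext y
    simp only [mem_preimage, MeasurableEquiv.piFinSuccAbove_symm_apply, Fin.insertNthEquiv_zero]
    exact cons_mem_hyperbolicCross_succ hx y
  rw [hsection]
  by_cases hxr : |x| < r
  · simp [hxr, abs_lt.1 hxr]
  · simp [hxr, ← abs_lt]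

/-- For `d ≥ 1` the two branches agree at `δ = r ^ d`; the strict inequality is what makes
`d = 0` come out right, the set being empty for `δ ≤ 1 = r ^ 0`. -/
def hyperbolicCrossVolume (d : ℕ) (r δ : ℝ) : ℝ :=
  if r ^ d < δ then (2 * r) ^ d else 2 ^ d * δ * expPartialSum d (Real.log (r ^ d / δ))

lemma hyperbolicCrossVolume_of_pow_lt {d : ℕ} {r δ : ℝ} (h : r ^ d < δ) :
    hyperbolicCrossVolume d r δ = (2 * r) ^ d :=
  if_pos h

lemma hyperbolicCrossVolume_of_le_pow {d : ℕ} {r δ : ℝ} (h : δ ≤ r ^ d) :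
    hyperbolicCrossVolume d r δ = 2 ^ d * δ * expPartialSum d (Real.log (r ^ d / δ)) :=
  if_neg h.not_gt

lemma hyperbolicCrossVolume_nonneg (d : ℕ) {r δ : ℝ} (hr : 0 ≤ r) (hδ : 0 ≤ δ) :
    0 ≤ hyperbolicCrossVolume d r δ := by
  unfold hyperbolicCrossVolume
  split_ifs with h
  · positivity
  · rcases hδ.eq_or_lt with rfl | hδ
    · simp
    · have := expPartialSum_nonneg d (Real.log_nonneg ((one_le_div hδ).2 (not_lt.1 h)))
      positivity

lemma hyperbolicCrossVolume_le (d : ℕ) {r δ : ℝ} (hr : 0 ≤ r) (hδ : 0 ≤ δ) :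
    hyperbolicCrossVolume d r δ ≤ (2 * r) ^ d := by
  unfold hyperbolicCrossVolume
  split_ifs with h
  · rfl
  · rcases hδ.eq_or_lt with rfl | hδ
    · rw [mul_zero, zero_mul]
      positivity
    · have hrδ : 0 < r ^ d / δ := div_pos (hδ.trans_le (not_lt.1 h)) hδ
      calc 2 ^ d * δ * expPartialSum d (Real.log (r ^ d / δ))
          ≤ 2 ^ d * δ * Real.exp (Real.log (r ^ d / δ)) := by
            gcongr
            exact expPartialSum_le_exp d (Real.log_nonneg ((one_le_div hδ).2 (not_lt.1 h)))
        _ = (2 * r) ^ d := by rw [Real.exp_log hrδ, mul_pow]; field_simp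

lemma integrableOn_hyperbolicCrossVolume_div_abs (d : ℕ) {r δ : ℝ} (hr : 0 ≤ r) (hδ : 0 ≤ δ)
    {s : Set ℝ} (hs : volume s ≠ ∞) :
    IntegrableOn (fun x => hyperbolicCrossVolume d r (δ / |x|)) s := by
  refine Measure.integrableOn_of_bounded (M := (2 * r) ^ d) hs ?_ (ae_of_all _ fun x => ?_)
  · have hE : Measurable (expPartialSum d) := by unfold expPartialSum; fun_prop
    exact (Measurable.ite (measurableSet_lt measurable_const (by fun_prop)) measurable_const
      (by fun_prop)).aestronglyMeasurable
  · have hx : 0 ≤ δ / |x| := by positivity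
    rw [Real.norm_of_nonneg (hyperbolicCrossVolume_nonneg d hr hx)]
    exact hyperbolicCrossVolume_le d hr hx

lemma hasDerivAt_const_mul_expPartialSum_log_sub (d : ℕ) {r δ x : ℝ} (hr : 0 < r) (hδ : 0 < δ)
    (hx : δ / r ^ d ≤ x) :
    HasDerivAt (fun x => 2 ^ d * δ * expPartialSum (d + 1) (Real.log x - Real.log (δ / r ^ d)))
      (hyperbolicCrossVolume d r (δ / x)) x := by
  have hrd : 0 < r ^ d := by positivity
  have hx0 : 0 < x := (by positivity : 0 < δ / r ^ d).trans_le hx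
  have hlog := (Real.hasDerivAt_log hx0.ne').sub_const (Real.log (δ / r ^ d))
  refine (((hasDerivAt_expPartialSum_succ d _).comp x hlog).const_mul _).congr_deriv ?_
  rw [hyperbolicCrossVolume_of_le_pow, ← Real.log_div hx0.ne' (by positivity)]
  · field_simp
  · rwa [div_le_iff₀ hx0, ← div_le_iff₀' hrd]

lemma integral_Ioo_hyperbolicCrossVolume_div (d : ℕ) {r δ : ℝ} (hr : 0 < r) (hδ : 0 < δ)
    (hδr : δ ≤ r ^ (d + 1)) :
    ∫ x in Ioo 0 r, hyperbolicCrossVolume d r (δ / x) =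
      2 ^ d * δ * expPartialSum (d + 1) (Real.log (r ^ (d + 1) / δ)) := by
  set a := δ / r ^ d
  have hrd : 0 < r ^ d := by positivity
  have ha : 0 < a := by positivity
  have har : a ≤ r := by rwa [div_le_iff₀ hrd, ← pow_succ']
  have hint {u v : ℝ} (hu : 0 ≤ u) (huv : u ≤ v) (hv : v ≤ r) :
      IntervalIntegrable (fun x => hyperbolicCrossVolume d r (δ / x)) volume u v := by
    refine (intervalIntegrable_iff_integrableOn_Icc_of_le huv).2 (IntegrableOn.mono_set ?_
      (Icc_subset_Icc hu hv))
    exact (integrableOn_hyperbolicCrossVolume_div_abs d hr.le hδ.le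
      measure_Icc_lt_top.ne).congr_fun (fun x hx => by simp only [abs_of_nonneg hx.1])
      measurableSet_Icc
  have hnear : ∫ x in (0)..a, hyperbolicCrossVolume d r (δ / x) = 2 ^ d * δ := by
    rw [intervalIntegral.integral_of_le ha.le, integral_Ioc_eq_integral_Ioo,
      setIntegral_congr_fun measurableSet_Ioo (g := fun _ => (2 * r) ^ d) fun x hx =>
        hyperbolicCrossVolume_of_pow_lt ?_,
      setIntegral_const, Real.volume_real_Ioo_of_le ha.le, smul_eq_mul]
    · simp only [a, sub_zero, mul_pow]
      field_simp
    · rw [lt_div_iff₀ hx.1, ← lt_div_iff₀' hrd]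
      exact hx.2
  have hfar : ∫ x in a..r, hyperbolicCrossVolume d r (δ / x) =
      2 ^ d * δ * (expPartialSum (d + 1) (Real.log (r ^ (d + 1) / δ)) - 1) := by
    have hra : r / a = r ^ (d + 1) / δ := by
      simp only [a]
      field_simp
      ring
    rw [intervalIntegral.integral_eq_sub_of_hasDerivAt
      (fun x hx => hasDerivAt_const_mul_expPartialSum_log_sub d hr hδ (uIcc_of_le har ▸ hx).1)
      (hint ha.le har le_rfl), sub_self, expPartialSum_succ_zero, ← Real.log_div hr.ne' ha.ne',
      hra]
    ring
  rw [← integral_Ioc_eq_integral_Ioo, ← intervalIntegral.integral_of_le hr.le,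
    ← intervalIntegral.integral_add_adjacent_intervals (hint le_rfl ha.le har)
      (hint ha.le har le_rfl), hnear, hfar]
  ring

theorem volume_hyperbolicCross (d : ℕ) {r δ : ℝ} (hr : 0 < r) (hδ : 0 < δ) :
    volume (hyperbolicCross d r δ) = ENNReal.ofReal (hyperbolicCrossVolume d r δ) := by
  rcases lt_or_ge (r ^ d) δ with hδr | hδr
  · rw [volume_hyperbolicCross_of_pow_lt hr.le hδr, hyperbolicCrossVolume_of_pow_lt hδr]
  cases d with
  | zero =>
    rw [pow_zero] at hδr
    simp [hyperbolicCross, hyperbolicCrossVolume, expPartialSum, hδr.not_gt]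
  | succ d =>
    have hslice : ∀ᵐ x, x ∈ Ioo (-r) r → volume (hyperbolicCross d r (δ / |x|)) =
        ENNReal.ofReal (hyperbolicCrossVolume d r (δ / |x|)) := by
      filter_upwards [Measure.ae_ne volume 0] with x hx _
      exact volume_hyperbolicCross d hr (by positivity)
    rw [volume_hyperbolicCross_succ, setLIntegral_congr_fun_ae measurableSet_Ioo hslice,
      ← ofReal_integral_eq_lintegral_ofReal
        (integrableOn_hyperbolicCrossVolume_div_abs d hr.le hδ.le measure_Ioo_lt_top.ne)
        (ae_of_all _ fun x => hyperbolicCrossVolume_nonneg d hr.le (by positivity)),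
      setIntegral_Ioo_comp_abs (fun x => hyperbolicCrossVolume d r (δ / x)),
      integral_Ioo_hyperbolicCrossVolume_div d hr hδ hδr, hyperbolicCrossVolume_of_le_pow hδr]
    congr 1
    ring

theorem statement13_general (d : ℕ) (r δ : ℝ) (hr : 0 < r) (hδ : 0 < δ)
    (hδr : δ ≤ r ^ d) :
    (volume {z : Fin d → ℝ | (∀ i, |z i| < r) ∧ |∏ i, z i| < δ}).toReal =
      2 ^ d * δ *
        ∑ t ∈ Finset.range d, (1 / (t.factorial : ℝ)) * Real.log (r ^ d / δ) ^ t := by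
  rw [← hyperbolicCross, volume_hyperbolicCross d hr hδ,
    ENNReal.toReal_ofReal (hyperbolicCrossVolume_nonneg d hr.le hδ.le),
    hyperbolicCrossVolume_of_le_pow hδr, expPartialSum]

theorem statement13 (d : ℕ) (hd : 1 ≤ d) (r δ : ℝ) (hr : 0 < r) (hδ : 0 < δ)
    (hδr : δ ≤ r ^ d) :
    (volume {z : Fin d → ℝ | (∀ i, |z i| < r) ∧ |∏ i, z i| < δ}).toReal =
      2 ^ d * δ *
        ∑ t ∈ Finset.range d, (1 / (t.factorial : ℝ)) * Real.log (r ^ d / δ) ^ t :=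
  statement13_general d r δ hr hδ hδr
end
end
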